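/- For rules r and s with disjoint bodies (body(r) ∩ body(s) = ∅), composition distributes over cup: ({r} ⊔ {s}) ∘ Q = ({r} ∘ Q) ⊔ ({s} ∘ Q) for every answer set program Q. -/
import Mathlib


open Classical Finset

/-- A rule of an answer set program: a head atom, a set of positive body atoms,
and a set of negated body atoms. -/
structure Rule (α : Type*) where
  head : α
  pos : Finset α
  neg : Finset α
deriving DecidableEq

instance {α : Type*} [DecidableEq α] [Fintype α] : Fintype (Rule α) :=
  Fintype.ofEquiv (α × Finset α × Finset α)
    { toFun := fun x => ⟨x.1, x.2.1, x.2.2⟩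
      invFun := fun r => (r.head, r.pos, r.neg)
      left_inv := fun _ => rfl
      right_inv := fun _ => rfl }

variable {α : Type*} [Fintype α] [DecidableEq α]

/-- Program-level negation (the tf/∨/De Morgan construction):
for each head atom `a`, either no rule of `R` has head `a` (then the fact `a` is produced),
or one negated literal is chosen from the body of each rule of `R` with head `a`
(De Morgan + distributivity); heads of facts of `R` are dropped (their body `{t}` negates to `f`). -/
noncomputable def notProg {α : Type*} [Fintype α] [DecidableEq α]
    (R : Finset (Rule α)) : Finset (Rule α) :=
  Finset.univ.filter (fun t =>
    ((∀ s ∈ R, s.head ≠ t.head) ∧ t.pos = ∅ ∧ t.neg = ∅) ∨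
    ((∃ s ∈ R, s.head = t.head) ∧
      ∃ c : Rule α → α ⊕ α,
        (∀ s ∈ R, s.head = t.head →
          Sum.elim (fun b => b ∈ s.pos) (fun b => b ∈ s.neg) (c s)) ∧
        t.pos.image Sum.inl ∪ t.neg.image Sum.inr =
          (R.filter (fun s => s.head = t.head)).image (fun s => Sum.swap (c s))))

/-- Sequential composition of answer set programs. -/
noncomputable def comp {α : Type*} [Fintype α] [DecidableEq α]
    (P R : Finset (Rule α)) : Finset (Rule α) :=
  Finset.univ.filter (fun t => ∃ r ∈ P, ∃ S N : Finset (Rule α),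
    S ⊆ R ∧ N ⊆ notProg R ∧
    S.card = r.pos.card ∧ N.card = r.neg.card ∧
    S.image Rule.head = r.pos ∧ N.image Rule.head = r.neg ∧
    t.head = r.head ∧
    t.pos = (S ∪ N).sup Rule.pos ∧
    t.neg = (S ∪ N).sup Rule.neg)

/-- The unit program `1_A = {a ← a : a ∈ A}`. -/
def unitP (α : Type*) [Fintype α] [DecidableEq α] : Finset (Rule α) :=
  Finset.univ.image (fun a => (⟨a, {a}, ∅⟩ : Rule α))

/-- An interpretation viewed as a fact program. -/
def interp {α : Type*} [Fintype α] [DecidableEq α] (I : Finset α) : Finset (Rule α) :=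
  I.image (fun a => (⟨a, ∅, ∅⟩ : Rule α))

/-- The facts (rules with empty body) of a program. -/
noncomputable def factsOf {α : Type*} [Fintype α] [DecidableEq α]
    (P : Finset (Rule α)) : Finset (Rule α) :=
  P.filter (fun r => r.pos = ∅ ∧ r.neg = ∅)

/-- The van Emden–Kowalski immediate consequence operator. -/
noncomputable def TP {α : Type*} [Fintype α] [DecidableEq α]
    (P : Finset (Rule α)) (I : Finset α) : Finset α :=
  (P.filter (fun r => r.pos ⊆ I ∧ Disjoint r.neg I)).image Rule.head

/-- The cup of two programs: conjoin bodies of rules with equal heads. -/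
noncomputable def cup {α : Type*} [Fintype α] [DecidableEq α]
    (P R : Finset (Rule α)) : Finset (Rule α) :=
  Finset.univ.filter (fun t => ∃ r ∈ P, ∃ s ∈ R, r.head = s.head ∧
    t.head = r.head ∧ t.pos = r.pos ∪ s.pos ∧ t.neg = r.neg ∪ s.neg)

private lemma image_card_split {α : Type*} [DecidableEq α]
    (S : Finset (Rule α)) (A B : Finset α) (_hAB : Disjoint A B)
    (him : S.image Rule.head = A ∪ B) (hcard : S.card = (A ∪ B).card) :
    ∃ S₁ S₂ : Finset (Rule α), S₁ ∪ S₂ = S ∧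
      S₁.image Rule.head = A ∧ S₂.image Rule.head = B ∧
      S₁.card = A.card ∧ S₂.card = B.card ∧ S₁ ⊆ S ∧ S₂ ⊆ S := by
  have hinj : Set.InjOn Rule.head (S : Set (Rule α)) := by
    rw [← Finset.card_image_iff, him, ← hcard]
  refine ⟨S.filter (fun x => x.head ∈ A), S.filter (fun x => x.head ∈ B),
    ?_, ?_, ?_, ?_, ?_, Finset.filter_subset _ _, Finset.filter_subset _ _⟩
  · ext x
    simp only [Finset.mem_union, Finset.mem_filter]
    constructor
    · rintro (⟨h, _⟩ | ⟨h, _⟩) <;> exact h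
    · intro hx
      have : x.head ∈ A ∪ B := him ▸ Finset.mem_image_of_mem _ hx
      rcases Finset.mem_union.mp this with h | h
      · exact Or.inl ⟨hx, h⟩
      · exact Or.inr ⟨hx, h⟩
  · ext a
    simp only [Finset.mem_image, Finset.mem_filter]
    constructor
    · rintro ⟨x, ⟨_, hxA⟩, rfl⟩; exact hxA
    · intro ha
      have : a ∈ S.image Rule.head := him ▸ Finset.mem_union_left _ ha
      rcases Finset.mem_image.mp this with ⟨x, hx, rfl⟩
      exact ⟨x, ⟨hx, ha⟩, rfl⟩
  · ext a
    simp only [Finset.mem_image, Finset.mem_filter]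
    constructor
    · rintro ⟨x, ⟨_, hxB⟩, rfl⟩; exact hxB
    · intro ha
      have : a ∈ S.image Rule.head := him ▸ Finset.mem_union_right _ ha
      rcases Finset.mem_image.mp this with ⟨x, hx, rfl⟩
      exact ⟨x, ⟨hx, ha⟩, rfl⟩
  · have h1 : ((S.filter (fun x => x.head ∈ A)).image Rule.head).card
        = (S.filter (fun x => x.head ∈ A)).card :=
      Finset.card_image_of_injOn (hinj.mono (by
        intro x hx; exact Finset.mem_of_mem_filter _ hx))
    have h2 : (S.filter (fun x => x.head ∈ A)).image Rule.head = A := by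
      ext a
      simp only [Finset.mem_image, Finset.mem_filter]
      constructor
      · rintro ⟨x, ⟨_, hxA⟩, rfl⟩; exact hxA
      · intro ha
        have : a ∈ S.image Rule.head := him ▸ Finset.mem_union_left _ ha
        rcases Finset.mem_image.mp this with ⟨x, hx, rfl⟩
        exact ⟨x, ⟨hx, ha⟩, rfl⟩
    rw [← h1, h2]
  · have h1 : ((S.filter (fun x => x.head ∈ B)).image Rule.head).card
        = (S.filter (fun x => x.head ∈ B)).card :=
      Finset.card_image_of_injOn (hinj.mono (by
        intro x hx; exact Finset.mem_of_mem_filter _ hx))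
    have h2 : (S.filter (fun x => x.head ∈ B)).image Rule.head = B := by
      ext a
      simp only [Finset.mem_image, Finset.mem_filter]
      constructor
      · rintro ⟨x, ⟨_, hxB⟩, rfl⟩; exact hxB
      · intro ha
        have : a ∈ S.image Rule.head := him ▸ Finset.mem_union_right _ ha
        rcases Finset.mem_image.mp this with ⟨x, hx, rfl⟩
        exact ⟨x, ⟨hx, ha⟩, rfl⟩
    rw [← h1, h2]

private lemma image_card_merge {α : Type*} [DecidableEq α]
    {A B : Finset α} (hAB : Disjoint A B) {S₁ S₂ : Finset (Rule α)}
    (h1 : S₁.image Rule.head = A) (h2 : S₂.image Rule.head = B)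
    (c1 : S₁.card = A.card) (c2 : S₂.card = B.card) :
    (S₁ ∪ S₂).image Rule.head = A ∪ B ∧ (S₁ ∪ S₂).card = (A ∪ B).card := by
  have hd : Disjoint S₁ S₂ := by
    rw [Finset.disjoint_left]
    intro x hx1 hx2
    have hA : x.head ∈ A := h1 ▸ Finset.mem_image_of_mem _ hx1
    have hB : x.head ∈ B := h2 ▸ Finset.mem_image_of_mem _ hx2
    exact Finset.disjoint_left.mp hAB hA hB
  refine ⟨by rw [Finset.image_union, h1, h2], ?_⟩
  rw [Finset.card_union_of_disjoint hd, Finset.card_union_of_disjoint hAB, c1, c2]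

private lemma sup_union_four {α : Type*} [DecidableEq α]
    (S₁ S₂ N₁ N₂ : Finset (Rule α)) (f : Rule α → Finset α) :
    ((S₁ ∪ S₂) ∪ (N₁ ∪ N₂)).sup f = (S₁ ∪ N₁).sup f ∪ (S₂ ∪ N₂).sup f := by
  ext a
  simp only [Finset.mem_sup, Finset.mem_union]
  constructor
  · rintro ⟨x, (h | h) | (h | h), hx⟩
    · exact Or.inl ⟨x, Or.inl h, hx⟩
    · exact Or.inr ⟨x, Or.inl h, hx⟩
    · exact Or.inl ⟨x, Or.inr h, hx⟩
    · exact Or.inr ⟨x, Or.inr h, hx⟩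
  · rintro (⟨x, h | h, hx⟩ | ⟨x, h | h, hx⟩)
    · exact ⟨x, Or.inl (Or.inl h), hx⟩
    · exact ⟨x, Or.inr (Or.inl h), hx⟩
    · exact ⟨x, Or.inl (Or.inr h), hx⟩
    · exact ⟨x, Or.inr (Or.inr h), hx⟩

/-- for rules with disjoint bodies, composition distributes over cup. -/
theorem comp_cup_distrib {α : Type*} [Fintype α] [DecidableEq α]
    (r s : Rule α) (hpos : Disjoint r.pos s.pos) (hneg : Disjoint r.neg s.neg)
    (Q : Finset (Rule α)) :
    comp (cup {r} {s}) Q = cup (comp {r} Q) (comp {s} Q) := by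
  ext t
  simp only [comp, cup, Finset.mem_filter, Finset.mem_univ, true_and,
    Finset.mem_singleton]
  constructor
  · rintro ⟨u, ⟨r', hr', s', hs', hhead, hu_head, hu_pos, hu_neg⟩,
      S, N, hSQ, hNQ, hScard, hNcard, hSim, hNim, ht_head, ht_pos, ht_neg⟩
    subst hr'; subst hs'
    rw [hu_pos] at hSim hScard
    rw [hu_neg] at hNim hNcard
    obtain ⟨S₁, S₂, hSu, hS1im, hS2im, hS1c, hS2c, hS1sub, hS2sub⟩ :=
      image_card_split S r'.pos s'.pos hpos hSim hScard
    obtain ⟨N₁, N₂, hNu, hN1im, hN2im, hN1c, hN2c, hN1sub, hN2sub⟩ :=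
      image_card_split N r'.neg s'.neg hneg hNim hNcard
    refine ⟨⟨r'.head, (S₁ ∪ N₁).sup Rule.pos, (S₁ ∪ N₁).sup Rule.neg⟩,
      ⟨r', rfl, S₁, N₁, hS1sub.trans hSQ, hN1sub.trans hNQ,
        hS1c, hN1c, hS1im, hN1im, rfl, rfl, rfl⟩,
      ⟨s'.head, (S₂ ∪ N₂).sup Rule.pos, (S₂ ∪ N₂).sup Rule.neg⟩,
      ⟨s', rfl, S₂, N₂, hS2sub.trans hSQ, hN2sub.trans hNQ,
        hS2c, hN2c, hS2im, hN2im, rfl, rfl, rfl⟩,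
      hhead, by rw [ht_head, hu_head], ?_, ?_⟩
    · rw [ht_pos, ← hSu, ← hNu]; exact sup_union_four _ _ _ _ _
    · rw [ht_neg, ← hSu, ← hNu]; exact sup_union_four _ _ _ _ _
  · rintro ⟨tr, ⟨r', hr', S₁, N₁, hS1Q, hN1Q, hS1c, hN1c, hS1im, hN1im,
      htr_head, htr_pos, htr_neg⟩,
      ts, ⟨s', hs', S₂, N₂, hS2Q, hN2Q, hS2c, hN2c, hS2im, hN2im,
      hts_head, hts_pos, hts_neg⟩,
      hheq, ht_head, ht_pos, ht_neg⟩
    subst hr'; subst hs'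
    have hrs : r'.head = s'.head := by rw [← htr_head, ← hts_head, hheq]
    obtain ⟨hSim, hScard⟩ := image_card_merge hpos hS1im hS2im hS1c hS2c
    obtain ⟨hNim, hNcard⟩ := image_card_merge hneg hN1im hN2im hN1c hN2c
    refine ⟨⟨r'.head, r'.pos ∪ s'.pos, r'.neg ∪ s'.neg⟩,
      ⟨r', rfl, s', rfl, hrs, rfl, rfl, rfl⟩,
      S₁ ∪ S₂, N₁ ∪ N₂, Finset.union_subset hS1Q hS2Q,
      Finset.union_subset hN1Q hN2Q, hScard, hNcard, hSim, hNim,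
      by rw [ht_head, htr_head], ?_, ?_⟩
    · rw [ht_pos, htr_pos, hts_pos]; exact (sup_union_four _ _ _ _ _).symm
    · rw [ht_neg, htr_neg, hts_neg]; exact (sup_union_four _ _ _ _ _).symm
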